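/- arXiv:1912.00720 — 4 statements merged into one kernel-verified Lean document; each statement's English description precedes it below -/
import Mathlib

section
/- Let λ ∈ ℝ and l = −1/2 + iλ. For every g = (α β; γ δ) in SL(2,ℝ) and every measurable square-integrable function f : ℝ → ℂ, the function x ↦ f((αx+γ)/(βx+δ)) · |βx+δ|^{2l} (defined for almost every x, namely those with βx+δ ≠ 0) is square-integrable and ∫_ℝ |f((αx+γ)/(βx+δ))|² · |βx+δ|^{−2} dx = ∫_ℝ |f(x)|² dx; in particular the operator T_l(g) : f ↦ (x ↦ f((αx+γ)/(βx+δ)) · |βx+δ|^{2l}) is an isometry of L²(ℝ, ℂ). -/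
/-!
For a unimodular matrix the Möbius map `φ x = (αx+γ)/(βx+δ)` is injective off the zero of
`βx+δ`, its image misses at most the point `α/β` (it is inverted by the Möbius map of the
adjugate), and `φ' x = (βx+δ)⁻²`. The change of variables formula thus gives
`∫ h (φ x) (βx+δ)⁻² dx = ∫ h`. Since `Re (2l) = -1`, the weight `|βx+δ|^(2l)` has modulus
`|βx+δ|⁻¹`, whose square is exactly that Jacobian. Measurability of `f ∘ φ` comes from `φ` being
quasi-measure-preserving: it pushes the measure with the a.e. positive density `(βx+δ)⁻²`,
which is equivalent to Lebesgue measure, forward to Lebesgue measure.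
-/

open MeasureTheory
open scoped MatrixGroups

noncomputable def moebius (α β γ δ x : ℝ) : ℝ := (α * x + γ) / (β * x + δ)

lemma volume_setOf_mul_add_eq_zero {a b : ℝ} (h : a ≠ 0 ∨ b ≠ 0) :
    volume {x : ℝ | a * x + b = 0} = 0 := by
  refine Set.Subsingleton.measure_zero (fun x hx y hy => ?_) volume
  simp only [Set.mem_ofPred_eq] at hx hy
  rcases eq_or_ne a 0 with rfl | ha
  · simp only [zero_mul, zero_add] at hx
    simp [hx] at h
  · exact mul_left_cancel₀ ha (by linarith)

section Moebius

variable {α β γ δ : ℝ}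

lemma measurableSet_denom_ne_zero : MeasurableSet {x : ℝ | β * x + δ ≠ 0} :=
  (measurableSet_eq_fun (by fun_prop) measurable_const).compl

lemma measurable_moebius : Measurable (moebius α β γ δ) := by
  unfold moebius
  fun_prop

lemma ae_denom_ne_zero (hdet : α * δ - β * γ ≠ 0) : ∀ᵐ x : ℝ, β * x + δ ≠ 0 := by
  refine measure_eq_zero_iff_ae_notMem.1 (volume_setOf_mul_add_eq_zero ?_)
  by_contra! h
  simp [h.1, h.2] at hdet

lemma injOn_moebius (hdet : α * δ - β * γ ≠ 0) :
    Set.InjOn (moebius α β γ δ) {x | β * x + δ ≠ 0} := by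
  intro x hx y hy hxy
  rw [moebius, moebius, div_eq_div_iff hx hy] at hxy
  exact mul_left_cancel₀ hdet (by linear_combination hxy)

lemma hasDerivAt_moebius {x : ℝ} (hx : β * x + δ ≠ 0) :
    HasDerivAt (moebius α β γ δ) ((α * δ - β * γ) / (β * x + δ) ^ 2) x := by
  have hnum : HasDerivAt (fun x => α * x + γ) α x := by
    simpa using ((hasDerivAt_id x).const_mul α).add_const γ
  have hden : HasDerivAt (fun x => β * x + δ) β x := by
    simpa using ((hasDerivAt_id x).const_mul β).add_const δ
  exact (hnum.div hden hx).congr_deriv (by ring)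

lemma ae_mem_image_moebius (hdet : α * δ - β * γ ≠ 0) :
    ∀ᵐ y : ℝ, y ∈ moebius α β γ δ '' {x | β * x + δ ≠ 0} := by
  have hnull := volume_setOf_mul_add_eq_zero (a := -β) (b := α) (by
    by_contra! h
    simp [h.2, neg_eq_zero.1 h.1] at hdet)
  filter_upwards [measure_eq_zero_iff_ae_notMem.1 hnull] with y hy
  have hy : α - β * y ≠ 0 := by simpa [neg_mul, neg_add_eq_sub] using hy
  have hnum : α * ((δ * y - γ) / (α - β * y)) + γ = (α * δ - β * γ) * y / (α - β * y) := by
    rw [mul_div_assoc', div_add' _ _ _ hy]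
    ring
  have hden : β * ((δ * y - γ) / (α - β * y)) + δ = (α * δ - β * γ) / (α - β * y) := by
    field_simp; ring
  refine ⟨(δ * y - γ) / (α - β * y), ?_, ?_⟩
  · rw [Set.mem_ofPred_eq, hden]
    exact div_ne_zero hdet hy
  · rw [moebius, hnum, hden]
    field_simp

lemma restrict_denom_ne_zero (hdet : α * δ - β * γ ≠ 0) :
    volume.restrict {x : ℝ | β * x + δ ≠ 0} = volume :=
  Measure.restrict_eq_self_of_ae_mem (ae_denom_ne_zero hdet)

lemma restrict_image_moebius (hdet : α * δ - β * γ ≠ 0) :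
    volume.restrict (moebius α β γ δ '' {x | β * x + δ ≠ 0}) = volume :=
  Measure.restrict_eq_self_of_ae_mem (ae_mem_image_moebius hdet)

end Moebius

lemma norm_ofReal_abs_cpow {s : ℂ} (hs : s.re = -1) (t : ℝ) : ‖((|t| : ℝ) : ℂ) ^ s‖ = |t|⁻¹ := by
  rcases eq_or_ne t 0 with rfl | ht
  · have : s ≠ 0 := fun h => by simp [h] at hs
    simp [Complex.zero_cpow this]
  · rw [Complex.norm_cpow_eq_rpow_re_of_pos (abs_pos.2 ht), hs, Real.rpow_neg_one]

lemma enorm_mul_ofReal_abs_cpow_rpow_two {s : ℂ} (hs : s.re = -1) (z : ℂ) (t : ℝ) :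
    ‖z * ((|t| : ℝ) : ℂ) ^ s‖ₑ ^ (2 : ℝ) = ENNReal.ofReal (t ^ 2)⁻¹ * ‖z‖ₑ ^ (2 : ℝ) := by
  rw [enorm_mul, ENNReal.mul_rpow_of_nonneg _ _ zero_le_two, mul_comm, ← ofReal_norm (x := _ ^ s),
    norm_ofReal_abs_cpow hs, ENNReal.ofReal_rpow_of_nonneg (by positivity) zero_le_two,
    Real.rpow_two, inv_pow, sq_abs]

section Unimodular

open scoped ENNReal

variable {α β γ δ : ℝ} {s : ℂ}

lemma lintegral_moebius (hdet : α * δ - β * γ = 1) (h : ℝ → ℝ≥0∞) :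
    ∫⁻ x, ENNReal.ofReal ((β * x + δ) ^ 2)⁻¹ * h (moebius α β γ δ x) = ∫⁻ y, h y := by
  have hdet' : α * δ - β * γ ≠ 0 := hdet ▸ one_ne_zero
  have := lintegral_image_eq_lintegral_abs_deriv_mul measurableSet_denom_ne_zero
    (fun x hx => (hasDerivAt_moebius hx).hasDerivWithinAt) (injOn_moebius hdet') h
  rw [restrict_image_moebius hdet', restrict_denom_ne_zero hdet'] at this
  simpa [hdet] using this.symm

lemma integral_moebius (hdet : α * δ - β * γ = 1) (h : ℝ → ℝ) :
    ∫ x, ((β * x + δ) ^ 2)⁻¹ * h (moebius α β γ δ x) = ∫ y, h y := by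
  have hdet' : α * δ - β * γ ≠ 0 := hdet ▸ one_ne_zero
  have := integral_image_eq_integral_abs_deriv_smul measurableSet_denom_ne_zero
    (fun x hx => (hasDerivAt_moebius hx).hasDerivWithinAt) (injOn_moebius hdet') h
  rw [restrict_image_moebius hdet', restrict_denom_ne_zero hdet'] at this
  simpa [hdet] using this.symm

lemma map_withDensity_moebius (hdet : α * δ - β * γ = 1) :
    (volume.withDensity fun x => ENNReal.ofReal ((β * x + δ) ^ 2)⁻¹).map (moebius α β γ δ) =
      volume := by
  have hdet' : α * δ - β * γ ≠ 0 := hdet ▸ one_ne_zero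
  have := map_withDensity_abs_det_fderiv_eq_addHaar volume
    measurableSet_denom_ne_zero.nullMeasurableSet
    (fun x hx => (hasDerivAt_moebius hx).hasDerivWithinAt.hasFDerivWithinAt) (injOn_moebius hdet')
  rw [restrict_image_moebius hdet', restrict_denom_ne_zero hdet'] at this
  simpa [hdet] using this

lemma quasiMeasurePreserving_moebius (hdet : α * δ - β * γ = 1) :
    Measure.QuasiMeasurePreserving (moebius α β γ δ) volume volume := by
  have hdet' : α * δ - β * γ ≠ 0 := hdet ▸ one_ne_zero
  refine ⟨measurable_moebius, ?_⟩
  conv_rhs => rw [← map_withDensity_moebius hdet]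
  refine Measure.AbsolutelyContinuous.map (withDensity_absolutelyContinuous' (by fun_prop) ?_)
    measurable_moebius
  filter_upwards [ae_denom_ne_zero hdet'] with x hx
  simpa using hx

lemma eLpNorm_comp_moebius_mul_cpow (hdet : α * δ - β * γ = 1) (hs : s.re = -1) (f : ℝ → ℂ) :
    eLpNorm (fun x => f (moebius α β γ δ x) * ((|β * x + δ| : ℝ) : ℂ) ^ s) 2 volume =
      eLpNorm f 2 volume := by
  simp only [eLpNorm_eq_lintegral_rpow_enorm_toReal two_ne_zero ENNReal.ofNat_ne_top,
    ENNReal.toReal_ofNat, enorm_mul_ofReal_abs_cpow_rpow_two hs,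
    lintegral_moebius hdet fun y => ‖f y‖ₑ ^ (2 : ℝ)]

lemma memLp_comp_moebius_mul_cpow (hdet : α * δ - β * γ = 1) (hs : s.re = -1) {f : ℝ → ℂ}
    (hf : MemLp f 2 volume) :
    MemLp (fun x => f (moebius α β γ δ x) * ((|β * x + δ| : ℝ) : ℂ) ^ s) 2 volume :=
  ⟨(hf.1.comp_quasiMeasurePreserving (quasiMeasurePreserving_moebius hdet)).mul
      (by fun_prop : Measurable fun x : ℝ => ((|β * x + δ| : ℝ) : ℂ) ^ s).aestronglyMeasurable,
    eLpNorm_comp_moebius_mul_cpow hdet hs f ▸ hf.2⟩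

end Unimodular

/-- For `l = -1/2 + iλ`, the principal series operator `T_l(g)` is an
isometry of `L²(ℝ, ℂ)`. -/
theorem statement2 (lam : ℝ) (l : ℂ) (hl : l = -(1/2) + Complex.I * lam)
    (g : SL(2, ℝ)) (α β γ δ : ℝ)
    (hg : (g : Matrix (Fin 2) (Fin 2) ℝ) = !![α, β; γ, δ])
    (f : ℝ → ℂ) (hf : MemLp f 2 (volume : Measure ℝ)) :
    (MemLp (fun x : ℝ =>
        f ((α * x + γ) / (β * x + δ)) * ((|β * x + δ| : ℝ) : ℂ) ^ (2 * l))
      2 (volume : Measure ℝ)) ∧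
    ((∫ x : ℝ, ‖f ((α * x + γ) / (β * x + δ))‖ ^ 2 * (|β * x + δ| ^ 2)⁻¹)
      = ∫ x : ℝ, ‖f x‖ ^ 2) ∧
    (eLpNorm (fun x : ℝ =>
        f ((α * x + γ) / (β * x + δ)) * ((|β * x + δ| : ℝ) : ℂ) ^ (2 * l))
      2 (volume : Measure ℝ) = eLpNorm f 2 (volume : Measure ℝ)) := by
  have hdet : α * δ - β * γ = 1 := by
    simpa [hg, Matrix.det_fin_two_of] using g.det_coe
  have hre : (2 * l).re = -1 := by simp [hl]
  refine ⟨memLp_comp_moebius_mul_cpow hdet hre hf, ?_, eLpNorm_comp_moebius_mul_cpow hdet hre f⟩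
  convert integral_moebius hdet (fun y => ‖f y‖ ^ 2) using 3 with x
  rw [sq_abs, mul_comm]
  rfl
end

section
/- Let λ ∈ ℝ and l = −1/2 + iλ. For m, n ∈ ℤ, the function x ↦ e_m^l(x) · conj(e_n^l(x)) is integrable on ℝ and ∫_ℝ e_m^l(x) · conj(e_n^l(x)) dx = 1 if m = n and = 0 if m ≠ n; that is, the family (e_m^l)_{m∈ℤ} is orthonormal in L²(ℝ, ℂ). -/
/-!
With the Cayley transform `c(x) = (x - i)/(x + i)`, which has modulus one, and since the factor
`(1 + x²)^l` has modulus `(1 + x²)^(-1/2)` when `Re l = -1/2`, the product `e_m · conj e_n` equals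
`c^k / (π (1 + x²))` with `k = m - n`. This is dominated by `1/(π (1 + x²))`, hence integrable. For
`k = 0` the integral of `c^k / (1 + x²)` is `π`; for `k ≠ 0` the function `c^k / (2ik)` is an
antiderivative of it, and since `c(x) → 1` as `x → ±∞` its limits at both ends agree, so the integral vanishes.
-/

open MeasureTheory
open scoped ComplexConjugate

/-- The elliptic basis functions `e_m^l(x) = π^{-1/2} ((x-i)/(x+i))^m (1+x²)^l`
for `l = -1/2 + iλ`. -/
noncomputable def ellipticBasis (lam : ℝ) (m : ℤ) (x : ℝ) : ℂ :=
  (Real.pi : ℂ) ^ (-(1/2) : ℂ) * (((x : ℂ) - Complex.I) / ((x : ℂ) + Complex.I)) ^ m *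
    ((1 + x ^ 2 : ℝ) : ℂ) ^ (-(1/2) + Complex.I * lam : ℂ)

open Complex Filter Topology Bornology

noncomputable def cayley (x : ℝ) : ℂ := (x - I) / (x + I)

lemma ofReal_add_I_ne_zero (x : ℝ) : (x : ℂ) + I ≠ 0 :=
  fun h => by simpa using congrArg im h

lemma ofReal_sub_I_ne_zero (x : ℝ) : (x : ℂ) - I ≠ 0 :=
  fun h => by simpa using congrArg im h

lemma cayley_ne_zero (x : ℝ) : cayley x ≠ 0 :=
  div_ne_zero (ofReal_sub_I_ne_zero x) (ofReal_add_I_ne_zero x)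

lemma conj_cayley (x : ℝ) : conj (cayley x) = (cayley x)⁻¹ := by
  simp [cayley, sub_eq_add_neg]

lemma norm_cayley (x : ℝ) : ‖cayley x‖ = 1 := by
  have : ‖(x : ℂ) - I‖ = ‖(x : ℂ) + I‖ := by
    rw [← norm_conj ((x : ℂ) + I)]; simp [sub_eq_add_neg]
  rw [cayley, norm_div, this, div_self (norm_ne_zero_iff.mpr (ofReal_add_I_ne_zero x))]

lemma continuous_cayley : Continuous cayley :=
  (continuous_ofReal.sub continuous_const).div (continuous_ofReal.add continuous_const)
    ofReal_add_I_ne_zero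

lemma cayley_eq_one_sub (x : ℝ) : cayley x = 1 - 2 * I * ((x : ℂ) + I)⁻¹ := by
  rw [cayley]
  field_simp [ofReal_add_I_ne_zero x]
  ring

lemma tendsto_cayley_cobounded : Tendsto cayley (cobounded ℝ) (𝓝 1) := by
  have h : Tendsto (fun x : ℝ => ((x : ℂ) + I)⁻¹) (cobounded ℝ) (𝓝 0) :=
    tendsto_inv₀_cobounded.comp
      ((tendsto_add_const_cobounded I).comp (RCLike.tendsto_ofReal_cobounded_cobounded ℂ))
  simpa [funext cayley_eq_one_sub] using (h.const_mul (2 * I)).const_sub 1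

lemma hasDerivAt_cayley (x : ℝ) : HasDerivAt cayley (2 * I / ((x : ℂ) + I) ^ 2) x := by
  have := ((hasDerivAt_id x).ofReal_comp.sub_const I).div
    ((hasDerivAt_id x).ofReal_comp.add_const I) (ofReal_add_I_ne_zero x)
  exact this.congr_deriv (by simp only [id, ofReal_one]; ring)

lemma hasDerivAt_cayley_zpow (k : ℤ) (x : ℝ) :
    HasDerivAt (fun t => cayley t ^ k)
      (2 * I * k * (cayley x ^ k * ((1 + x ^ 2 : ℝ) : ℂ)⁻¹)) x := by
  refine ((hasDerivAt_zpow k (cayley x) (.inl (cayley_ne_zero x))).comp x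
    (hasDerivAt_cayley x)).congr_deriv ?_
  have hfactor : ((1 + x ^ 2 : ℝ) : ℂ) = ((x : ℂ) + I) * ((x : ℂ) - I) := by
    push_cast; linear_combination I_sq
  rw [zpow_sub_one₀ (cayley_ne_zero x), hfactor, cayley]
  field_simp [ofReal_add_I_ne_zero x, ofReal_sub_I_ne_zero x]

lemma integrable_cayley_zpow_mul_inv_one_add_sq (k : ℤ) :
    Integrable fun x : ℝ => cayley x ^ k * ((1 + x ^ 2 : ℝ) : ℂ)⁻¹ := by
  refine integrable_inv_one_add_sq.mono' ?_ (.of_forall fun x => ?_)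
  · exact ((continuous_cayley.zpow₀ k fun x => .inl (cayley_ne_zero x)).mul
      ((continuous_ofReal.comp (by fun_prop)).inv₀ fun x => ofReal_ne_zero.mpr (by positivity)))
      |>.aestronglyMeasurable
  · rw [norm_mul, norm_zpow, norm_cayley, one_zpow, one_mul, norm_inv, norm_real,
      Real.norm_of_nonneg (by positivity)]

lemma integral_cayley_zpow_mul_inv_one_add_sq (k : ℤ) :
    ∫ x : ℝ, cayley x ^ k * ((1 + x ^ 2 : ℝ) : ℂ)⁻¹ = if k = 0 then (Real.pi : ℂ) else 0 := by
  split_ifs with hk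
  · simp only [hk, zpow_zero, one_mul, ← ofReal_inv]
    rw [integral_complex_ofReal, integral_univ_inv_one_add_sq]
  · have hk' : (2 * I * k : ℂ) ≠ 0 := by simp [hk]
    have hlim : ∀ l ≤ cobounded ℝ,
        Tendsto (fun x => cayley x ^ k / (2 * I * k)) l (𝓝 (1 / (2 * I * k))) := by
      intro l hl
      have := (continuousAt_zpow₀ (1 : ℂ) k (.inl one_ne_zero)).tendsto.comp
        (tendsto_cayley_cobounded.mono_left hl)
      simpa using this.div_const (2 * I * k)
    rw [integral_of_hasDerivAt_of_tendsto (fun x => ?_)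
      (integrable_cayley_zpow_mul_inv_one_add_sq k) (hlim _ IsOrderBornology.atBot_le_cobounded)
      (hlim _ IsOrderBornology.atTop_le_cobounded), sub_self]
    exact ((hasDerivAt_cayley_zpow k x).div_const (2 * I * k)).congr_deriv
      (mul_div_cancel_left₀ _ hk')

lemma ellipticBasis_eq_cayley_zpow_mul (lam : ℝ) (m : ℤ) (x : ℝ) :
    ellipticBasis lam m x = cayley x ^ m * ellipticBasis lam 0 x := by
  simp only [ellipticBasis, zpow_zero, mul_one, cayley]
  ring

lemma norm_ellipticBasis_sq (lam : ℝ) (m : ℤ) (x : ℝ) :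
    ‖ellipticBasis lam m x‖ ^ 2 = Real.pi⁻¹ * (1 + x ^ 2)⁻¹ := by
  rw [ellipticBasis, ← cayley, norm_mul, norm_mul, norm_zpow, norm_cayley, one_zpow, mul_one,
    norm_cpow_eq_rpow_re_of_pos Real.pi_pos, norm_cpow_eq_rpow_re_of_pos (by positivity)]
  have hsq (a : ℝ) (ha : 0 < a) : (a ^ (-(1 / 2) : ℂ).re) ^ 2 = a⁻¹ := by
    norm_num [← Real.rpow_mul_natCast ha.le, Real.rpow_neg_one]
  rw [mul_pow, hsq _ Real.pi_pos, show (-(1 / 2) + I * lam : ℂ).re = (-(1 / 2) : ℂ).re by simp,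
    hsq _ (by positivity)]

lemma ellipticBasis_mul_conj (lam : ℝ) (m n : ℤ) (x : ℝ) :
    ellipticBasis lam m x * conj (ellipticBasis lam n x)
      = (Real.pi : ℂ)⁻¹ * (cayley x ^ (m - n) * ((1 + x ^ 2 : ℝ) : ℂ)⁻¹) := by
  rw [ellipticBasis_eq_cayley_zpow_mul lam m, ellipticBasis_eq_cayley_zpow_mul lam n, map_mul,
    map_zpow₀, conj_cayley, inv_zpow', mul_mul_mul_comm, ← zpow_add₀ (cayley_ne_zero x),
    ← sub_eq_add_neg, mul_conj', ← ofReal_pow, norm_ellipticBasis_sq]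
  push_cast
  ring

/-- The family `(e_m^l)_{m ∈ ℤ}` is orthonormal in `L²(ℝ, ℂ)`. -/
theorem statement4 (lam : ℝ) (m n : ℤ) :
    (Integrable (fun x : ℝ => ellipticBasis lam m x * conj (ellipticBasis lam n x))
      (volume : Measure ℝ)) ∧
    ((∫ x : ℝ, ellipticBasis lam m x * conj (ellipticBasis lam n x))
      = if m = n then 1 else 0) := by
  simp_rw [ellipticBasis_mul_conj]
  refine ⟨(integrable_cayley_zpow_mul_inv_one_add_sq _).const_mul _, ?_⟩
  rw [integral_const_mul, integral_cayley_zpow_mul_inv_one_add_sq]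
  simp only [sub_eq_zero]
  split_ifs
  · exact inv_mul_cancel₀ (ofReal_ne_zero.mpr Real.pi_ne_zero)
  · exact mul_zero _
end

section
/- Let λ ∈ ℝ and l = −1/2 + iλ. For every φ ∈ ℝ, every m ∈ ℤ, and every x ∈ ℝ with −sin(φ)·x + cos(φ) ≠ 0, one has e_m^l((cos(φ)·x + sin(φ))/(−sin(φ)·x + cos(φ))) · |−sin(φ)·x + cos(φ)|^{2l} = e^{2imφ} · e_m^l(x). (That is, e_m^l is an eigenvector of the rotation operator T_l(k_φ) with eigenvalue e^{2imφ}, where k_φ = (cos φ, −sin φ; sin φ, cos φ).) -/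
open Complex

lemma aux_cpow (z : ℂ) (a b : ℝ) (ha : 0 < a) (hb : 0 < b) :
    ((a / b^2 : ℝ) : ℂ) ^ z * ((b : ℝ) : ℂ) ^ (2 * z) = ((a : ℝ) : ℂ) ^ z := by
  have key : ∀ (r : ℝ) (w : ℂ), 0 < r →
      ((r:ℝ):ℂ) ^ w = Complex.exp ((Real.log r : ℂ) * w) := by
    intro r w hr
    rw [Complex.cpow_def_of_ne_zero (by exact_mod_cast hr.ne'),
      Complex.ofReal_log hr.le]
  have hab : (0:ℝ) < a / b^2 := by positivity
  rw [key _ _ hab, key _ _ hb, key _ _ ha, ← Complex.exp_add]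
  congr 1
  rw [Real.log_div ha.ne' (by positivity), Real.log_pow]
  push_cast
  ring

/-- `e_m^l` is an eigenvector of the rotation operator `T_l(k_φ)`
with eigenvalue `e^{2imφ}`. -/
theorem statement6 (lam : ℝ) (l : ℂ) (hl : l = -(1/2) + Complex.I * lam)
    (φ : ℝ) (m : ℤ) (x : ℝ)
    (hx : -Real.sin φ * x + Real.cos φ ≠ 0) :
    ellipticBasis lam m
        ((Real.cos φ * x + Real.sin φ) / (-Real.sin φ * x + Real.cos φ)) *
      ((|(-Real.sin φ * x + Real.cos φ)| : ℝ) : ℂ) ^ (2 * l)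
    = Complex.exp (2 * m * φ * Complex.I) * ellipticBasis lam m x := by
  subst hl
  unfold ellipticBasis
  set c := Real.cos φ with hc
  set s := Real.sin φ with hs
  set d : ℝ := -s * x + c with hd
  set y : ℝ := (c * x + s) / d with hy
  have hd0 : d ≠ 0 := hx
  have hdC : ((d:ℝ):ℂ) ≠ 0 := by exact_mod_cast hd0
  have hxI : (x:ℂ) + I ≠ 0 := by
    intro h; have := congrArg Complex.im h; simp at this
  have hpyth : s^2 + c^2 = 1 := Real.sin_sq_add_cos_sq φ
  -- 1 + y² = (1+x²)/|d|²
  have hyd : y * d = c*x + s := by rw [hy]; field_simp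
  have hmul : (1 + y^2) * d^2 = 1 + x^2 := by
    have h2 : (y*d)^2 = (c*x+s)^2 := by rw [hyd]
    rw [hd] at h2 ⊢
    linear_combination h2 + (x^2+1)*hpyth
  have hsum : 1 + y^2 = (1 + x^2) / |d|^2 := by
    rw [_root_.sq_abs, eq_div_iff (pow_ne_zero 2 hd0)]
    exact hmul
  -- the Möbius ratio identity
  have hyC : ((y:ℝ):ℂ) = ((c:ℂ)*x+s) / (-(s:ℂ)*x+c) := by
    rw [hy, hd]; push_cast; ring
  have hden2 : -(s:ℂ)*x+c ≠ 0 := by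
    rw [show -(s:ℂ)*x+(c:ℂ) = ((d:ℝ):ℂ) by rw [hd]; push_cast; ring]
    exact hdC
  have hyI : ((y:ℝ):ℂ) + I ≠ 0 := by
    intro h; have := congrArg Complex.im h; simp at this
  have hcsC : (c:ℂ)^2 + (s:ℂ)^2 = 1 := by
    exact_mod_cast (show c^2 + s^2 = (1:ℝ) by linarith)
  have hCS : (c:ℂ) - (s:ℂ)*I ≠ 0 := by
    intro h
    have h1 : (1:ℂ) = 0 := by
      rw [← hcsC]; linear_combination ((c:ℂ) + (s:ℂ)*I) * h + (s:ℂ)^2 * Complex.I_sq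
    exact one_ne_zero h1
  have hnum : (((y:ℝ):ℂ) - I) * (-(s:ℂ)*x+c)
      = ((c:ℂ)+(s:ℂ)*I)*((x:ℂ)-I) := by
    rw [hyC, sub_mul, div_mul_cancel₀ _ hden2]
    linear_combination (s:ℂ) * Complex.I_sq
  have hden : (((y:ℝ):ℂ) + I) * (-(s:ℂ)*x+c)
      = ((c:ℂ)-(s:ℂ)*I)*((x:ℂ)+I) := by
    rw [hyC, add_mul, div_mul_cancel₀ _ hden2]
    linear_combination (s:ℂ) * Complex.I_sq
  have hratio : (((y:ℝ):ℂ) - I) / (((y:ℝ):ℂ) + I)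
      = Complex.exp (2*(φ:ℂ)*I) * (((x:ℂ) - I)/((x:ℂ)+I)) := by
    have he : Complex.exp (2*(φ:ℂ)*I) = ((c:ℂ) + (s:ℂ)*I)^2 := by
      rw [show (2*(φ:ℂ)*I) = (φ:ℂ)*I + (φ:ℂ)*I by ring, Complex.exp_add,
        Complex.exp_mul_I, hc, hs]
      push_cast
      ring
    have h1 : (((y:ℝ):ℂ) - I) / (((y:ℝ):ℂ) + I)
        = (((c:ℂ)+(s:ℂ)*I)*((x:ℂ)-I)) / (((c:ℂ)-(s:ℂ)*I)*((x:ℂ)+I)) := by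
      rw [← hnum, ← hden, mul_div_mul_right _ _ hden2]
    rw [h1, he, mul_div_assoc']
    rw [div_eq_div_iff (mul_ne_zero hCS hxI) hxI]
    linear_combination (-(((c:ℂ)+(s:ℂ)*I)*((x:ℂ)-I)*((x:ℂ)+I))) * hcsC
      + (((c:ℂ)+(s:ℂ)*I)*((x:ℂ)-I)*((x:ℂ)+I)) * (s:ℂ)^2 * Complex.I_sq
  -- exponential of integer multiple
  have hE : Complex.exp (2*(m:ℂ)*(φ:ℂ)*I) = Complex.exp (2*(φ:ℂ)*I) ^ m := by
    rw [← Complex.exp_int_mul]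
    congr 1
    ring
  have hpow : ((((y:ℝ):ℂ) - I)/(((y:ℝ):ℂ)+I))^m
      = Complex.exp (2*(m:ℂ)*(φ:ℂ)*I) * (((x:ℂ)-I)/((x:ℂ)+I))^m := by
    rw [hratio, mul_zpow, ← hE]
  have hcp : ((1 + y^2:ℝ):ℂ) ^ (-(1/2) + Complex.I * lam : ℂ)
        * ((|d|:ℝ):ℂ) ^ (2 * (-(1/2) + Complex.I * lam : ℂ))
      = ((1 + x^2:ℝ):ℂ) ^ (-(1/2) + Complex.I * lam : ℂ) := by
    rw [hsum]
    exact aux_cpow _ (1+x^2) |d| (by positivity) (abs_pos.mpr hd0)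
  rw [hpow]
  linear_combination ((Real.pi:ℂ) ^ (-(1/2) : ℂ)
      * Complex.exp (2*(m:ℂ)*(φ:ℂ)*I) * (((x:ℂ)-I)/((x:ℂ)+I))^m) * hcp
end

section
/- For a > 0 and b ∈ ℝ let π₀(a,b) be the unitary operator on L²((0,∞), ℂ) defined (almost everywhere) by (π₀(a,b)η)(y) = a^{−1} · e^{iyb/a} · η(y/a²). If T is a bounded linear operator on L²((0,∞), ℂ) such that T ∘ π₀(a,b) = π₀(a,b) ∘ T for all a > 0 and b ∈ ℝ, then there exists c ∈ ℂ with T = c · Id. (That is, the restriction of the representation π₀ of the group H to L²((0,∞)) is irreducible; together with the analogous statement on L²((−∞,0)), π₀ splits into exactly two irreducible subrepresentations.) -/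
/-!
The modulations `π₀(1, b)` are multiplications by `e^{iyb}`. An operator `T` commuting with them
is a multiplication operator: for a Gaussian `g₀` and `A = T* g₀`, the `L¹` functions
`conj f · A` and `conj (T f) · g₀` have the same Fourier transform, because
`⟪e_b f, A⟫ = ⟪T (e_b f), g₀⟫ = ⟪e_b (T f), g₀⟫`; hence `T f = m f` with `m = conj A / g₀`.
Commuting with the dilations `π₀(a, 0)` forces `m (s y) = m y` a.e. for every `s > 0`, and by
Fubini a measurable function on `(0, ∞)` invariant under all dilations is a.e. constant.
-/

open MeasureTheory Set Complex FourierTransform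
open scoped ContDiff ComplexConjugate InnerProductSpace

theorem MeasureTheory.Integrable.ae_eq_zero_of_fourier_eq_zero {V : Type*}
    [NormedAddCommGroup V] [InnerProductSpace ℝ V] [FiniteDimensional ℝ V]
    [MeasurableSpace V] [BorelSpace V] {f : V → ℂ} (hf : Integrable f) (h𝓕f : 𝓕 f = 0) :
    f =ᵐ[volume] 0 := by
  refine ae_eq_zero_of_integral_contDiff_smul_eq_zero hf.locallyIntegrable fun g hg hg_supp => ?_
  -- `g` is the Fourier transform of the Schwartz function `Ψ`, so `∫ g f = ∫ Ψ 𝓕f`.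
  let Ψ : SchwartzMap V ℂ :=
    𝓕⁻ ((hg_supp.comp_left ofReal_zero).toSchwartzMap (ofRealCLM.contDiff.comp hg))
  have h𝓕Ψ : 𝓕 (Ψ : V → ℂ) = fun x => (g x : ℂ) := by
    rw [← SchwartzMap.fourier_coe, FourierInvPair.fourier_fourierInv_eq]; rfl
  have hflip : (innerₗ V).flip = innerₗ V := by
    ext x y; exact real_inner_comm x y
  have hself := VectorFourier.integral_fourierIntegral_smul_eq_flip (L := innerₗ V)
    Real.continuous_fourierChar continuous_inner hf (Ψ.integrable (μ := volume))
  rw [hflip] at hself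
  calc ∫ x, g x • f x = ∫ x, f x • 𝓕 (Ψ : V → ℂ) x := by simp [h𝓕Ψ, real_smul, mul_comm]
    _ = ∫ ξ, 𝓕 f ξ • Ψ ξ := hself.symm
    _ = 0 := by simp [h𝓕f]

theorem ae_restrict_eq_of_integral_exp_mul_eq {s : Set ℝ} (hs : MeasurableSet s) {u v : ℝ → ℂ}
    (hu : IntegrableOn u s) (hv : IntegrableOn v s)
    (huv : ∀ b : ℝ, ∫ y in s, cexp (-(I * y * b)) * u y = ∫ y in s, cexp (-(I * y * b)) * v y) :
    u =ᵐ[volume.restrict s] v := by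
  have hw : Integrable (s.indicator (u - v)) := (integrable_indicator_iff hs).2 (hu.sub hv)
  have h𝓕w : 𝓕 (s.indicator (u - v)) = 0 := by
    ext ξ
    set b : ℝ := 2 * Real.pi * ξ
    have hexp : ∀ w : ℝ → ℂ, IntegrableOn w s →
        IntegrableOn (fun y : ℝ => cexp (-(I * y * b)) * w y) s := fun w hw =>
      hw.bdd_mul (c := 1) (by fun_prop) (ae_of_all _ fun y => by
        rw [norm_exp]; simp)
    calc 𝓕 (s.indicator (u - v)) ξ
        = ∫ y in s, (cexp (-(I * y * b)) * u y - cexp (-(I * y * b)) * v y) := by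
          rw [Real.fourier_real_eq_integral_exp_smul, ← integral_indicator hs]
          congr 1 with y
          by_cases hy : y ∈ s
          · simp only [indicator_of_mem hy, Pi.sub_apply, smul_eq_mul, ← mul_sub, b]
            congr 2
            push_cast
            ring
          · simp [indicator_of_notMem hy]
      _ = 0 := by rw [integral_sub (hexp u hu) (hexp v hv), huv, sub_self]
  filter_upwards [ae_restrict_of_ae (hw.ae_eq_zero_of_fourier_eq_zero h𝓕w),
    ae_restrict_mem hs] with y hy hys
  simpa [indicator_of_mem hys, sub_eq_zero] using hy

theorem MeasureTheory.MemLp.cexp_mul {μ : Measure ℝ} {p : ENNReal} {f : ℝ → ℂ} (hf : MemLp f p μ)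
    (b : ℝ) : MemLp (fun y : ℝ => cexp (I * y * b) * f y) p μ :=
  hf.of_le ((by fun_prop : Continuous fun y : ℝ => cexp (I * y * b)).aestronglyMeasurable.mul
    hf.aestronglyMeasurable) (ae_of_all _ fun y => by simp [norm_exp])

section Modulation

variable {μ : Measure ℝ}

noncomputable def modulate (b : ℝ) (f : Lp ℂ 2 μ) : Lp ℂ 2 μ :=
  ((Lp.memLp f).cexp_mul b).toLp _

theorem coeFn_modulate (b : ℝ) (f : Lp ℂ 2 μ) :
    modulate b f =ᵐ[μ] fun y => cexp (I * y * b) * f y :=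
  MemLp.coeFn_toLp _

theorem inner_modulate_left (b : ℝ) (f g : Lp ℂ 2 μ) :
    ⟪modulate b f, g⟫_ℂ = ∫ y, cexp (-(I * y * b)) * ⟪f y, g y⟫_ℂ ∂μ := by
  rw [L2.inner_def]
  refine integral_congr_ae ?_
  filter_upwards [coeFn_modulate b f] with y hy
  simp only [hy, RCLike.inner_apply', map_mul, ← exp_conj, conj_I, conj_ofReal]
  ring_nf

end Modulation

theorem memLp_gaussian {b : ℝ} (hb : 0 < b) :
    MemLp (fun y : ℝ => (Real.exp (-b * y ^ 2) : ℂ)) 2 volume := by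
  refine (memLp_two_iff_integrable_sq_norm (by fun_prop)).2 ?_
  refine (integrable_exp_neg_mul_sq (mul_pos two_pos hb)).congr (ae_of_all _ fun y => ?_)
  simp only [norm_real, Real.norm_eq_abs, abs_of_pos (Real.exp_pos _), ← Real.exp_nat_mul]
  ring_nf

theorem exists_mul_of_commute_modulate {s : Set ℝ} (hs : MeasurableSet s)
    (T : Lp ℂ 2 (volume.restrict s) →L[ℂ] Lp ℂ 2 (volume.restrict s))
    (hT : ∀ b f, T (modulate b f) = modulate b (T f)) :
    ∃ m : ℝ → ℂ, Measurable m ∧ ∀ f, T f =ᵐ[volume.restrict s] fun y => m y * f y := by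
  let g₀ : Lp ℂ 2 (volume.restrict s) := ((memLp_gaussian one_pos).restrict s).toLp _
  let A := T.adjoint g₀
  have hA : Measurable A := (Lp.stronglyMeasurable A).measurable
  refine ⟨fun y => conj (A y) * Real.exp (y ^ 2), by fun_prop, fun f => ?_⟩
  have hkey : (fun y => ⟪f y, A y⟫_ℂ) =ᵐ[volume.restrict s] fun y => ⟪T f y, g₀ y⟫_ℂ := by
    refine ae_restrict_eq_of_integral_exp_mul_eq hs (L2.integrable_inner f A)
      (L2.integrable_inner (T f) g₀) fun b => ?_
    rw [← inner_modulate_left, ← inner_modulate_left, ← hT, T.adjoint_inner_right]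
  have hg₀ : g₀ =ᵐ[volume.restrict s] fun y => (Real.exp (-1 * y ^ 2) : ℂ) := MemLp.coeFn_toLp _
  filter_upwards [hkey, hg₀] with y hy hg₀
  have hconj := congrArg conj hy
  simp only [RCLike.inner_apply', map_mul, conj_conj, hg₀, conj_ofReal] at hconj
  have hexp : (Real.exp (-1 * y ^ 2) : ℂ) * Real.exp (y ^ 2) = 1 := by
    rw [← ofReal_mul, ← Real.exp_add]; simp
  calc T f y = T f y * Real.exp (-1 * y ^ 2) * Real.exp (y ^ 2) := by
        rw [mul_assoc, hexp, mul_one]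
    _ = conj (A y) * Real.exp (y ^ 2) * f y := by rw [← hconj]; ring

theorem ae_restrict_Ioi_comp_mul {c : ℝ} (hc : 0 < c) {P : ℝ → Prop}
    (hP : ∀ᵐ y ∂volume.restrict (Ioi 0), P y) : ∀ᵐ y ∂volume.restrict (Ioi 0), P (c * y) :=
  ((Measure.quasiMeasurePreserving_smul volume hc.ne').restrict
    fun _ hy => mul_pos hc hy).ae hP

theorem exists_ae_eq_const_of_ae_comp_mul_eq {β : Type*} [MeasurableSpace β] [MeasurableEq β]
    {m : ℝ → β} (hm : Measurable m)
    (hinv : ∀ s > 0, ∀ᵐ y ∂volume.restrict (Ioi 0), m (s * y) = m y) :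
    ∃ c, ∀ᵐ y ∂volume.restrict (Ioi 0), m y = c := by
  have hswap : ∀ᵐ y ∂volume.restrict (Ioi 0), ∀ᵐ s ∂volume.restrict (Ioi 0), m (s * y) = m y := by
    rw [← Measure.ae_ae_comm (p := fun s y => m (s * y) = m y)
      (measurableSet_eq_fun (by fun_prop) (by fun_prop))]
    filter_upwards [ae_restrict_mem measurableSet_Ioi] with s hs using hinv s hs
  have : (ae (volume.restrict (Ioi (0 : ℝ)))).NeBot := ae_restrict_neBot.2 (by simp)
  obtain ⟨y₀, hy₀, hy₀_pos⟩ := (hswap.and (ae_restrict_mem measurableSet_Ioi)).exists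
  refine ⟨m y₀, ?_⟩
  filter_upwards [ae_restrict_Ioi_comp_mul (inv_pos.2 hy₀_pos) hy₀] with y hy
  rwa [mul_right_comm, inv_mul_cancel₀ hy₀_pos.ne', one_mul] at hy

local notation "L²₊" => Lp ℂ 2 (Measure.restrict volume (Ioi (0 : ℝ)))

def CommutesWithPiZero (T : L²₊ →L[ℂ] L²₊) : Prop :=
  ∀ (a b : ℝ), 0 < a → ∀ η ζ : L²₊,
    (∀ᵐ y ∂volume.restrict (Ioi 0),
      ζ y = (a : ℂ)⁻¹ * cexp (I * y * b / a) * η (y / a ^ 2)) →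
    (∀ᵐ y ∂volume.restrict (Ioi 0),
      (T ζ) y = (a : ℂ)⁻¹ * cexp (I * y * b / a) * (T η) (y / a ^ 2))

namespace CommutesWithPiZero

variable {T : L²₊ →L[ℂ] L²₊} (hT : CommutesWithPiZero T)
include hT

theorem modulate_comm (b : ℝ) (f : L²₊) : T (modulate b f) = modulate b (T f) := by
  refine Lp.ext ?_
  have hπ := hT 1 b one_pos f (modulate b f) (by
    filter_upwards [coeFn_modulate b f] with y hy
    simpa using hy)
  filter_upwards [hπ, coeFn_modulate b (T f)] with y h₁ h₂
  simpa [h₂] using h₁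

theorem ae_comp_mul_eq {m : ℝ → ℂ}
    (hm : ∀ f, T f =ᵐ[volume.restrict (Ioi 0)] fun y => m y * f y) {s : ℝ} (hs : 0 < s) :
    ∀ᵐ y ∂volume.restrict (Ioi 0), m (s * y) = m y := by
  -- `π₀(a, 0)` with `a = s^{-1/2}` maps the Gaussian `η` to `ζ = a⁻¹ η(s ·)`
  set a : ℝ := (Real.sqrt s)⁻¹
  have ha : 0 < a := inv_pos.2 (Real.sqrt_pos.2 hs)
  have hdiv : ∀ y : ℝ, y / a ^ 2 = s * y := fun y => by
    rw [inv_pow, Real.sq_sqrt hs.le, div_inv_eq_mul, mul_comm]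
  have hη := (memLp_gaussian one_pos).restrict (Ioi (0 : ℝ))
  have hζ := ((memLp_gaussian (pow_pos hs 2)).restrict (Ioi (0 : ℝ))).const_mul (a : ℂ)⁻¹
  have hgauss : ∀ y : ℝ, Real.exp (-s ^ 2 * y ^ 2) = Real.exp (-1 * (s * y) ^ 2) := fun y => by
    ring_nf
  have hη_ae := MemLp.coeFn_toLp hη
  have hη_ae_scaled := ae_restrict_Ioi_comp_mul hs hη_ae
  have hπ := hT a 0 ha (hη.toLp _) (hζ.toLp _) (by
    filter_upwards [MemLp.coeFn_toLp hζ, hη_ae_scaled] with y h₁ h₂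
    rw [h₁, hdiv, h₂, hgauss]
    simp)
  filter_upwards [hπ, hm (hζ.toLp _), ae_restrict_Ioi_comp_mul hs (hm (hη.toLp _)),
    MemLp.coeFn_toLp hζ, hη_ae_scaled] with y h₁ h₂ h₃ h₄ h₅
  rw [h₂, h₄, hdiv, h₃, h₅, ← hgauss] at h₁
  simp only [ofReal_zero, mul_zero, zero_div, Complex.exp_zero, mul_one] at h₁
  have hne : (a : ℂ)⁻¹ * (Real.exp (-s ^ 2 * y ^ 2) : ℂ) ≠ 0 := by
    simp [ha.ne']
  exact mul_right_cancel₀ hne (by linear_combination -h₁)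

end CommutesWithPiZero

/-- The representation `π₀` of the `ax+b`-group `H` on `L²((0,∞), ℂ)`,
`(π₀(a,b)η)(y) = a⁻¹ e^{iyb/a} η(y/a²)`, is irreducible: any bounded operator `T` commuting
with all `π₀(a,b)` is a scalar multiple of the identity. The commutation `T ∘ π₀(a,b) =
π₀(a,b) ∘ T` is expressed via almost-everywhere representatives: whenever `ζ` is an
a.e. representative of `π₀(a,b)η`, then `Tζ` is an a.e. representative of `π₀(a,b)(Tη)`. -/
theorem statement13
    (T : Lp ℂ 2 ((volume : Measure ℝ).restrict (Set.Ioi (0 : ℝ))) →L[ℂ]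
         Lp ℂ 2 ((volume : Measure ℝ).restrict (Set.Ioi (0 : ℝ))))
    (hT : ∀ (a b : ℝ), 0 < a →
      ∀ η ζ : Lp ℂ 2 ((volume : Measure ℝ).restrict (Set.Ioi (0 : ℝ))),
        (∀ᵐ y ∂((volume : Measure ℝ).restrict (Set.Ioi (0 : ℝ))),
          ζ y = (a : ℂ)⁻¹ * Complex.exp (Complex.I * y * b / a) * η (y / a ^ 2)) →
        (∀ᵐ y ∂((volume : Measure ℝ).restrict (Set.Ioi (0 : ℝ))),
          (T ζ) y = (a : ℂ)⁻¹ * Complex.exp (Complex.I * y * b / a) * (T η) (y / a ^ 2))) :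
    ∃ c : ℂ, T = c • ContinuousLinearMap.id ℂ
      (Lp ℂ 2 ((volume : Measure ℝ).restrict (Set.Ioi (0 : ℝ)))) := by
  have hT : CommutesWithPiZero T := hT
  obtain ⟨m, hm_meas, hm⟩ := exists_mul_of_commute_modulate measurableSet_Ioi T hT.modulate_comm
  obtain ⟨c, hc⟩ :=
    exists_ae_eq_const_of_ae_comp_mul_eq hm_meas fun s hs => hT.ae_comp_mul_eq hm hs
  refine ⟨c, ContinuousLinearMap.ext fun f => Lp.ext ?_⟩
  filter_upwards [hm f, hc, Lp.coeFn_smul c f] with y hTf hmy hcf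
  simp [hTf, hmy, hcf]
end
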